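/- arXiv:1103.1709 — 2 statements merged into one kernel-verified Lean document; each statement's English description precedes it below -/
import Mathlib

section
/- Suppose r ≥ 2 and X is a random variable with E[X] = 0 and E[|X|^r] < ∞. Then there is a constant C_r < ∞ depending only on r such that for any i.i.d. sequence X₁, X₂, ... distributed as X and all k ≥ 1, E[|X₁ + ... + X_k|^r] ≤ C_r k^{r/2} E[|X|^r]. -/
open MeasureTheory ProbabilityTheory Real

theorem P1 (q : ℝ) (hq : 1 ≤ q) (u v : ℝ) (hu : 0 ≤ u) (hv : 0 ≤ v) :
    |u ^ q - v ^ q| ≤ q * (max u v) ^ (q-1) * |u - v| := by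
  have key := Convex.norm_image_sub_le_of_norm_hasDerivWithin_le
    (f := fun t : ℝ => t ^ q) (f' := fun t => q * t ^ (q-1)) (s := Set.Icc (min u v) (max u v))
    (C := q * (max u v) ^ (q-1))
    (fun t _ => (Real.hasDerivAt_rpow_const (Or.inr hq)).hasDerivWithinAt)
    (fun t ht => by
      have h0 : 0 ≤ t := le_trans (le_min hu hv) ht.1
      have hle : t ^ (q-1) ≤ (max u v) ^ (q-1) :=
        Real.rpow_le_rpow h0 ht.2 (by linarith)
      rw [Real.norm_eq_abs, abs_mul, abs_of_nonneg (by positivity : (0:ℝ) ≤ q),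
        abs_of_nonneg (Real.rpow_nonneg h0 _)]
      exact mul_le_mul_of_nonneg_left hle (by positivity))
    (convex_Icc _ _) ⟨min_le_left u v, le_max_left u v⟩
      ⟨min_le_right u v, le_max_right u v⟩
  simpa [Real.norm_eq_abs, abs_sub_comm] using key

noncomputable def cc (r : ℝ) : ℝ := 3^r + r*2^(r-1) + r*(r-1)*(3/2)^(r-2)

theorem cc_pos (r : ℝ) (hr : 2 ≤ r) : 0 < cc r := by
  have h1 : (0:ℝ) < 3 ^ r := Real.rpow_pos_of_pos (by norm_num) _
  have h2 : (0:ℝ) < 2 ^ (r-1) := Real.rpow_pos_of_pos (by norm_num) _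
  have h3 : (0:ℝ) ≤ (3/2:ℝ) ^ (r-2) := Real.rpow_nonneg (by norm_num) _
  have h4 : (0:ℝ) ≤ r*(r-1) := by nlinarith
  have : (0:ℝ) ≤ r*(r-1)*(3/2)^(r-2) := mul_nonneg h4 h3
  unfold cc; nlinarith

theorem ptwise (r : ℝ) (hr : 2 ≤ r) (x y : ℝ) :
    |y + x| ^ r ≤ |y| ^ r + (r * Real.sign y * |y| ^ (r-1)) * x
      + cc r * (|y| ^ (r-2) * |x| ^ (2:ℝ) + |x| ^ r) := by
  have hr1 : (1:ℝ) ≤ r - 1 := by linarith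
  have hr2 : (0:ℝ) ≤ r - 2 := by linarith
  have hxr : (0:ℝ) ≤ |x| ^ r := Real.rpow_nonneg (abs_nonneg _) _
  have hyr2 : (0:ℝ) ≤ |y| ^ (r-2) := Real.rpow_nonneg (abs_nonneg _) _
  have hx2 : (0:ℝ) ≤ |x| ^ (2:ℝ) := Real.rpow_nonneg (abs_nonneg _) _
  rcases le_or_gt (|y|) (2*|x|) with hc | hc
  · -- case |y| ≤ 2|x|
    rcases eq_or_ne x 0 with rfl | hx0
    · have hy0 : y = 0 := by
        have h1 := abs_nonneg y
        simp only [abs_zero, mul_zero] at hc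
        exact abs_eq_zero.mp (le_antisymm hc h1)
      simp only [hy0, add_zero, abs_zero]
      rw [Real.zero_rpow (by linarith : r ≠ 0)]
      simp only [mul_zero, zero_mul, add_zero, zero_add]
      have : (0:ℝ) ≤ cc r := (cc_pos r hr).le
      nlinarith [Real.rpow_nonneg (le_refl (0:ℝ)) (r-2), Real.rpow_nonneg (le_refl (0:ℝ)) r, Real.rpow_nonneg (le_refl (0:ℝ)) (2:ℝ)]
    have hxpos : 0 < |x| := abs_pos.mpr hx0
    have h1 : |y + x| ^ r ≤ 3^r * |x| ^ r := by
      calc |y + x| ^ r ≤ (3*|x|) ^ r := by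
            apply Real.rpow_le_rpow (abs_nonneg _) _ (by linarith)
            calc |y + x| ≤ |y| + |x| := abs_add_le _ _
              _ ≤ 3 * |x| := by linarith
        _ = 3^r * |x|^r := Real.mul_rpow (by norm_num) (abs_nonneg _)
    have h2 : -((r * Real.sign y * |y| ^ (r-1)) * x) ≤ r * 2^(r-1) * |x| ^ r := by
      have hs : |Real.sign y| ≤ 1 := by
        rcases lt_trichotomy y 0 with h|h|h
        · simp [Real.sign_of_neg h]
        · simp [h]
        · simp [Real.sign_of_pos h]
      have hy1 : |y| ^ (r-1) ≤ 2^(r-1) * |x|^(r-1) := by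
        calc |y| ^ (r-1) ≤ (2*|x|) ^ (r-1) := Real.rpow_le_rpow (abs_nonneg _) hc (by linarith)
          _ = 2^(r-1) * |x|^(r-1) := Real.mul_rpow (by norm_num) (abs_nonneg _)
      calc -((r * Real.sign y * |y| ^ (r-1)) * x) ≤ |r * Real.sign y * |y| ^ (r-1) * x| := neg_le_abs _
        _ = r * |Real.sign y| * |y|^(r-1) * |x| := by
            rw [abs_mul, abs_mul, abs_mul, abs_of_nonneg (by linarith : (0:ℝ) ≤ r),
              abs_of_nonneg (Real.rpow_nonneg (abs_nonneg _) _)]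
        _ ≤ r * 1 * (2^(r-1) * |x|^(r-1)) * |x| := by
            apply mul_le_mul_of_nonneg_right _ (abs_nonneg _)
            apply mul_le_mul (by nlinarith [abs_nonneg (Real.sign y)]) hy1
              (Real.rpow_nonneg (abs_nonneg _) _) (by positivity)
        _ = r * 2^(r-1) * (|x|^(r-1) * |x|) := by ring
        _ = r * 2^(r-1) * |x| ^ r := by
            rw [← Real.rpow_add_one (ne_of_gt hxpos)]; ring_nf
    have hyr : (0:ℝ) ≤ |y| ^ r := Real.rpow_nonneg (abs_nonneg _) _
    have hlast : (0:ℝ) ≤ r*(r-1)*(3/2)^(r-2) * |x|^r := by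
      have : (0:ℝ) ≤ (3/2:ℝ)^(r-2) := Real.rpow_nonneg (by norm_num) _
      positivity
    have expand : cc r * (|y| ^ (r-2) * |x| ^ (2:ℝ) + |x| ^ r)
        ≥ 3^r * |x|^r + r*2^(r-1)*|x|^r := by
      have h3 : (0:ℝ) < 3 ^ r := Real.rpow_pos_of_pos (by norm_num) _
      have h2' : (0:ℝ) < 2 ^ (r-1) := Real.rpow_pos_of_pos (by norm_num) _
      have hcc : cc r * |x|^r = 3^r*|x|^r + r*2^(r-1)*|x|^r + r*(r-1)*(3/2)^(r-2)*|x|^r := by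
        unfold cc; ring
      have h0 : (0:ℝ) ≤ |y| ^ (r-2) * |x| ^ (2:ℝ) := by positivity
      nlinarith [cc_pos r hr]
    linarith
  · -- case 2|x| < |y|
    set s := Real.sign y with hs_def
    have hy0 : y ≠ 0 := by
      intro h; rw [h] at hc; simp at hc; linarith [abs_nonneg x, hc]
    have hss : s * s = 1 := by
      rcases lt_trichotomy y 0 with h|h|h
      · simp [hs_def, Real.sign_of_neg h]
      · exact absurd h hy0
      · simp [hs_def, Real.sign_of_pos h]
    have habs_s : |s| = 1 := by
      rcases lt_trichotomy y 0 with h|h|h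
      · simp [hs_def, Real.sign_of_neg h]
      · exact absurd h hy0
      · simp [hs_def, Real.sign_of_pos h]
    set A := |y| with hA_def
    have hApos : 0 < A := abs_pos.mpr hy0
    set u := s * x with hu_def
    have hu_abs : |u| = |x| := by rw [hu_def, abs_mul, habs_s, one_mul]
    have hu_half : |u| ≤ A / 2 := by rw [hu_abs]; linarith
    have hsA : s * A = y := by
      rcases lt_trichotomy y 0 with h|h|h
      · rw [hs_def, hA_def, Real.sign_of_neg h, abs_of_neg h]; ring
      · exact absurd h hy0
      · rw [hs_def, hA_def, Real.sign_of_pos h, abs_of_pos h]; ring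
    have hyx : y + x = s * (A + u) := by
      rw [mul_add, hsA, hu_def, ← mul_assoc, hss, one_mul]
    have habs_yx : |y + x| = A + u := by
      rw [hyx, abs_mul, habs_s, one_mul, abs_of_nonneg]
      have := neg_abs_le u; linarith
    -- MVT setup
    set K := r * (r-1) * (3/2)^(r-2) with hK_def
    have key : (A+u)^r - A^r - r * A^(r-1) * u ≤ K * A^(r-2) * |u|^(2:ℝ) := by
      set φ : ℝ → ℝ := fun t => (A+t)^r - r*A^(r-1)*t with hφ
      set φ' : ℝ → ℝ := fun t => r*(A+t)^(r-1) - r*A^(r-1) with hφ'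
      have hC : ∀ t ∈ Set.Icc (-|u|) (|u|), ‖φ' t‖ ≤ K * A^(r-2) * |u| := by
        intro t ht
        have htu : |t| ≤ |u| := abs_le.mpr ht
        have hAt : A/2 ≤ A + t := by
          have := neg_abs_le t; linarith [htu, hu_half]
        have hAt0 : (0:ℝ) ≤ A + t := by linarith
        have hp1 := P1 (r-1) hr1 (A+t) A hAt0 hApos.le
        have hmax : max (A+t) A ≤ 3/2 * A := by
          apply max_le _ (by linarith)
          have := le_abs_self t; linarith [htu, hu_half]
        have hmax0 : (0:ℝ) ≤ max (A+t) A := le_trans hApos.le (le_max_right _ _)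
        have hmono : (max (A+t) A)^(r-1-1) ≤ (3/2*A)^(r-1-1) :=
          Real.rpow_le_rpow hmax0 hmax (by linarith)
        have h32 : ((3:ℝ)/2*A)^(r-1-1) = (3/2)^(r-2) * A^(r-2) := by
          rw [show r-1-1 = r-2 by ring, Real.mul_rpow (by norm_num) hApos.le]
        have hφ't : ‖φ' t‖ = r * |(A+t)^(r-1) - A^(r-1)| := by
          rw [hφ']; simp only [Real.norm_eq_abs]
          rw [show r*(A+t)^(r-1) - r*A^(r-1) = r*((A+t)^(r-1) - A^(r-1)) by ring,
            abs_mul, abs_of_nonneg (by linarith : (0:ℝ) ≤ r)]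
        rw [hφ't]
        have hsub : |A + t - A| = |t| := by congr 1; ring
        calc r * |(A+t)^(r-1) - A^(r-1)|
            ≤ r * ((r-1) * (max (A+t) A)^(r-1-1) * |A+t-A|) :=
              mul_le_mul_of_nonneg_left hp1 (by linarith)
          _ ≤ r * ((r-1) * ((3/2)^(r-2) * A^(r-2)) * |u|) := by
              apply mul_le_mul_of_nonneg_left _ (by linarith : (0:ℝ) ≤ r)
              rw [hsub]
              apply mul_le_mul _ htu (abs_nonneg _) _
              · exact mul_le_mul_of_nonneg_left (h32 ▸ hmono) (by linarith)
              · have : (0:ℝ) ≤ (3/2:ℝ)^(r-2) := Real.rpow_nonneg (by norm_num) _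
                positivity
          _ = K * A^(r-2) * |u| := by rw [hK_def]; ring
      have hderiv : ∀ t ∈ Set.Icc (-|u|) (|u|), HasDerivWithinAt φ (φ' t) (Set.Icc (-|u|) (|u|)) t := by
        intro t ht
        have htu : |t| ≤ |u| := abs_le.mpr ht
        have hAt : (0:ℝ) < A + t := by
          have := neg_abs_le t; have := hu_half; linarith [htu]
        have h1 : HasDerivAt (fun t : ℝ => (A+t)^r) (1*r*(A+t)^(r-1)) t :=
          HasDerivAt.rpow_const ((hasDerivAt_id t).const_add A) (Or.inl (ne_of_gt hAt))
        have h1b : HasDerivAt (fun t : ℝ => r*A^(r-1)*t) (r*A^(r-1)) t := by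
          simpa using (hasDerivAt_id t).const_mul (r*A^(r-1))
        have h2 : HasDerivAt φ (1*r*(A+t)^(r-1) - r*A^(r-1)) t := h1.sub h1b
        have : HasDerivAt φ (φ' t) t := by
          convert h2 using 1; rw [hφ']; ring
        exact this.hasDerivWithinAt
      have hmvt := Convex.norm_image_sub_le_of_norm_hasDerivWithin_le hderiv hC (convex_Icc _ _)
        (by constructor <;> [linarith [abs_nonneg u]; linarith [abs_nonneg u]] :
          (0:ℝ) ∈ Set.Icc (-|u|) (|u|))
        (by constructor <;> [exact neg_abs_le u; exact le_abs_self u] : u ∈ Set.Icc (-|u|) (|u|))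
      have : φ u - φ 0 ≤ K * A^(r-2) * |u| * |u| := by
        have := hmvt
        rw [Real.norm_eq_abs, Real.norm_eq_abs, sub_zero] at this
        calc φ u - φ 0 ≤ |φ u - φ 0| := le_abs_self _
          _ ≤ K * A^(r-2)*|u| * |u| := this
      have hφ0 : φ 0 = A ^ r := by simp [hφ]
      have hφu : φ u = (A+u)^r - r*A^(r-1)*u := rfl
      have huu : |u| * |u| = |u|^(2:ℝ) := by
        rw [show (2:ℝ) = ((2:ℕ):ℝ) by norm_num, Real.rpow_natCast]; ring
      calc (A+u)^r - A^r - r*A^(r-1)*u = φ u - φ 0 := by rw [hφu, hφ0]; ring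
        _ ≤ K * A^(r-2) * |u| * |u| := this
        _ = K * A^(r-2) * |u|^(2:ℝ) := by rw [mul_assoc, huu]
    -- assemble
    have hterm : (r * Real.sign y * |y| ^ (r-1)) * x = r * A^(r-1) * u := by
      rw [hu_def, hA_def]; ring
    have hKle : K * A^(r-2) * |u|^(2:ℝ) ≤ cc r * (|y|^(r-2) * |x|^(2:ℝ) + |x|^r) := by
      have hcc : K ≤ cc r := by
        unfold cc; rw [hK_def]
        have h1 : (0:ℝ) < 3 ^ r := Real.rpow_pos_of_pos (by norm_num) _
        have h2 : (0:ℝ) < 2 ^ (r-1) := Real.rpow_pos_of_pos (by norm_num) _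
        nlinarith
      have hA2 : A^(r-2) = |y|^(r-2) := by rw [hA_def]
      have hu2 : |u|^(2:ℝ) = |x|^(2:ℝ) := by rw [hu_abs]
      rw [hA2, hu2]
      have hKpos : (0:ℝ) ≤ K := by
        rw [hK_def]
        have : (0:ℝ) ≤ (3/2:ℝ)^(r-2) := Real.rpow_nonneg (by norm_num) _
        positivity
      have h0 : (0:ℝ) ≤ |y|^(r-2) * |x|^(2:ℝ) := by positivity
      nlinarith [cc_pos r hr, mul_le_mul_of_nonneg_right hcc h0]
    rw [habs_yx, hterm, hA_def]
    linarith [key, hKle]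

theorem int_rpow_of_le {Ω : Type} [MeasurableSpace Ω] {P : Measure Ω} [IsProbabilityMeasure P]
    {f : Ω → ℝ} (hf : AEStronglyMeasurable f P) {q p : ℝ} (hq : 0 ≤ q) (hqp : q ≤ p)
    (hint : Integrable (fun ω => |f ω| ^ p) P) :
    Integrable (fun ω => |f ω| ^ q) P := by
  have hmeas : AEStronglyMeasurable (fun ω => |f ω| ^ q) P := by
    exact (hf.norm.aemeasurable.pow_const q).aestronglyMeasurable
  refine (hint.add (integrable_const 1)).mono hmeas ?_
  filter_upwards with ω
  simp only [Pi.add_apply, Real.norm_eq_abs]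
  have main : |f ω| ^ q ≤ |f ω| ^ p + 1 := by
    rcases le_or_gt (|f ω|) 1 with h | h
    · have h1 : |f ω| ^ q ≤ 1 := Real.rpow_le_one (abs_nonneg _) h hq
      have h2 : (0:ℝ) ≤ |f ω| ^ p := Real.rpow_nonneg (abs_nonneg _) _
      linarith
    · have h1 : |f ω| ^ q ≤ |f ω| ^ p := Real.rpow_le_rpow_of_exponent_le h.le hqp
      linarith
  calc |(|f ω| ^ q)| = |f ω| ^ q := abs_of_nonneg (Real.rpow_nonneg (abs_nonneg _) _)
    _ ≤ |f ω| ^ p + 1 := main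
    _ ≤ |(|f ω| ^ p + 1)| := le_abs_self _

theorem lyap {Ω : Type} [MeasurableSpace Ω] {P : Measure Ω} [IsProbabilityMeasure P]
    {f : Ω → ℝ} (hf : AEStronglyMeasurable f P) {q p : ℝ} (hq : 0 ≤ q) (hqp : q ≤ p)
    (hp : 0 < p) (hint : Integrable (fun ω => |f ω| ^ p) P) :
    ∫ ω, |f ω| ^ q ∂P ≤ (∫ ω, |f ω| ^ p ∂P) ^ (q / p) := by
  rcases eq_or_lt_of_le hq with rfl | hq0
  · simp [Real.rpow_zero]
  have hq0' : q ≠ 0 := ne_of_gt hq0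
  have hpq1 : 1 ≤ p / q := (one_le_div hq0).mpr hqp
  set F : Ω → ℝ := fun ω => |f ω| ^ q with hF
  have hFint : Integrable F P := int_rpow_of_le hf hq hqp hint
  have hgF : ∀ ω, (F ω) ^ (p/q) = |f ω| ^ p := fun ω => by
    rw [hF, ← Real.rpow_mul (abs_nonneg _), mul_div_cancel₀ _ hq0']
  have hjensen := ConvexOn.map_integral_le (μ := P) (s := Set.Ici (0:ℝ))
    (g := fun t => t ^ (p/q)) (f := F)
    (convexOn_rpow hpq1)
    (by
      intro t ht
      exact (Real.continuous_rpow_const (by positivity)).continuousAt.continuousWithinAt)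
    isClosed_Ici
    (Filter.Eventually.of_forall fun ω => Real.rpow_nonneg (abs_nonneg _) _)
    hFint
    (by
      have : (fun t => t ^ (p/q)) ∘ F = fun ω => |f ω| ^ p := funext fun ω => hgF ω
      rw [this]; exact hint)
  rw [show ∫ ω, (F ω) ^ (p/q) ∂P = ∫ ω, |f ω| ^ p ∂P from
    integral_congr_ae (Filter.Eventually.of_forall fun ω => hgF ω)] at hjensen
  -- hjensen : (∫ F)^(p/q) ≤ ∫ |f|^p
  have hF0 : 0 ≤ ∫ ω, F ω ∂P :=
    integral_nonneg fun ω => Real.rpow_nonneg (abs_nonneg _) _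
  have := Real.rpow_le_rpow (Real.rpow_nonneg hF0 _) hjensen (by positivity : (0:ℝ) ≤ q/p)
  rwa [← Real.rpow_mul hF0, div_mul_div_comm, mul_comm p q, div_self (by positivity),
    Real.rpow_one] at this

theorem measurable_realSign : Measurable Real.sign := by
  have h : Real.sign = fun r : ℝ => if r < 0 then (-1:ℝ) else if 0 < r then 1 else 0 :=
    funext fun r => rfl
  rw [h]
  exact Measurable.ite measurableSet_Iio measurable_const
    (Measurable.ite measurableSet_Ioi measurable_const measurable_const)

theorem abs_realSign_le (t : ℝ) : |Real.sign t| ≤ 1 := by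
  rcases lt_trichotomy t 0 with h|h|h
  · simp [Real.sign_of_neg h]
  · simp [h]
  · simp [Real.sign_of_pos h]

theorem step {Ω : Type} [MeasurableSpace Ω] {P : Measure Ω} [IsProbabilityMeasure P]
    (r : ℝ) (hr : 2 ≤ r) {S X : Ω → ℝ} (hS : Measurable S) (hX : Measurable X)
    (hind : IndepFun S X P)
    (hSr : Integrable (fun ω => |S ω| ^ r) P) (hXr : Integrable (fun ω => |X ω| ^ r) P)
    (hX0 : ∫ ω, X ω ∂P = 0) :
    Integrable (fun ω => |S ω + X ω| ^ r) P ∧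
    ∫ ω, |S ω + X ω| ^ r ∂P ≤ ∫ ω, |S ω| ^ r ∂P
      + cc r * ((∫ ω, |S ω| ^ (r-2) ∂P) * (∫ ω, |X ω| ^ (2:ℝ) ∂P) + ∫ ω, |X ω| ^ r ∂P) := by
  have hr0 : (0:ℝ) < r := by linarith
  -- integrability of the various powers
  have hSr1 : Integrable (fun ω => |S ω| ^ (r-1)) P :=
    int_rpow_of_le hS.aestronglyMeasurable (by linarith) (by linarith) hSr
  have hSr2 : Integrable (fun ω => |S ω| ^ (r-2)) P :=
    int_rpow_of_le hS.aestronglyMeasurable (by linarith) (by linarith) hSr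
  have hX2 : Integrable (fun ω => |X ω| ^ (2:ℝ)) P :=
    int_rpow_of_le hX.aestronglyMeasurable (by norm_num) hr hXr
  have hX1 : Integrable X P := by
    have h1 : Integrable (fun ω => |X ω| ^ (1:ℝ)) P :=
      int_rpow_of_le hX.aestronglyMeasurable (by norm_num) (by linarith) hXr
    simp only [Real.rpow_one] at h1
    have : Integrable (fun ω => ‖X ω‖) P := by simpa [Real.norm_eq_abs] using h1
    rwa [integrable_norm_iff hX.aestronglyMeasurable] at this
  -- the function g(t) = r * sign t * |t|^(r-1)
  set g : ℝ → ℝ := fun t => r * Real.sign t * |t| ^ (r-1) with hg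
  have hgmeas : Measurable g := by
    apply Measurable.mul
    · exact (measurable_const.mul measurable_realSign)
    · exact measurable_id.abs.pow_const _
  have hgS_int : Integrable (fun ω => g (S ω)) P := by
    refine (hSr1.const_mul r).mono (hgmeas.comp hS).aestronglyMeasurable ?_
    filter_upwards with ω
    simp only [Real.norm_eq_abs, hg, Function.comp]
    rw [abs_mul, abs_mul, abs_of_nonneg (by linarith : (0:ℝ) ≤ r),
      abs_of_nonneg (Real.rpow_nonneg (abs_nonneg _) _), abs_mul,
      abs_of_nonneg (by linarith : (0:ℝ) ≤ r)]
    rw [abs_of_nonneg (Real.rpow_nonneg (abs_nonneg _) _)]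
    have h1 := abs_realSign_le (S ω)
    have h2 : |Real.sign (S ω)| * |S ω| ^ (r-1) ≤ 1 * |S ω| ^ (r-1) :=
      mul_le_mul_of_nonneg_right h1 (Real.rpow_nonneg (abs_nonneg _) _)
    nlinarith [h2, hr0]
  -- independence of composed variables
  have hind_gX : IndepFun (fun ω => g (S ω)) X P := hind.comp hgmeas measurable_id
  have hind_pq : IndepFun (fun ω => |S ω| ^ (r-2)) (fun ω => |X ω| ^ (2:ℝ)) P :=
    hind.comp (measurable_id.abs.pow_const (r-2)) (measurable_id.abs.pow_const (2:ℝ))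
  -- cross term integrable with zero integral
  have hcross_int : Integrable (fun ω => g (S ω) * X ω) P := by
    have := hind_gX.integrable_mul hgS_int hX1
    exact this
  have hcross_zero : ∫ ω, g (S ω) * X ω ∂P = 0 := by
    have h := IndepFun.integral_mul_eq_mul_integral hind_gX hgS_int.aestronglyMeasurable hX1.aestronglyMeasurable
    have heq : (fun ω => g (S ω) * X ω) = (fun ω => g (S ω)) * X := rfl
    rw [heq]
    rw [h]
    have hX0' : integral P X = 0 := hX0
    rw [hX0', mul_zero]
  -- product term
  have hprod_int : Integrable (fun ω => |S ω| ^ (r-2) * |X ω| ^ (2:ℝ)) P := by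
    have := hind_pq.integrable_mul hSr2 hX2
    exact this
  have hprod_eq : ∫ ω, |S ω| ^ (r-2) * |X ω| ^ (2:ℝ) ∂P
      = (∫ ω, |S ω| ^ (r-2) ∂P) * (∫ ω, |X ω| ^ (2:ℝ) ∂P) := by
    have := IndepFun.integral_mul_eq_mul_integral hind_pq hSr2.aestronglyMeasurable hX2.aestronglyMeasurable
    exact this
  -- the dominating function T
  set T : Ω → ℝ := fun ω => |S ω| ^ r + g (S ω) * X ω
      + cc r * (|S ω| ^ (r-2) * |X ω| ^ (2:ℝ) + |X ω| ^ r) with hT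
  have hTint : Integrable T P := by
    apply Integrable.add
    · exact hSr.add hcross_int
    · exact (hprod_int.add hXr).const_mul _
  have hTval : ∫ ω, T ω ∂P = ∫ ω, |S ω| ^ r ∂P
      + cc r * ((∫ ω, |S ω| ^ (r-2) ∂P) * (∫ ω, |X ω| ^ (2:ℝ) ∂P) + ∫ ω, |X ω| ^ r ∂P) := by
    have i1 : Integrable (fun ω => |S ω| ^ r + g (S ω) * X ω) P := hSr.add hcross_int
    have i2 : Integrable (fun ω => cc r * (|S ω| ^ (r-2) * |X ω| ^ (2:ℝ) + |X ω| ^ r)) P :=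
      (hprod_int.add hXr).const_mul _
    rw [hT]
    rw [integral_add i1 i2, integral_add hSr hcross_int, hcross_zero, add_zero,
      integral_const_mul, integral_add hprod_int hXr, hprod_eq]
  have hbound : ∀ ω, |S ω + X ω| ^ r ≤ T ω := fun ω => ptwise r hr (X ω) (S ω)
  have hmeas_lhs : AEStronglyMeasurable (fun ω => |S ω + X ω| ^ r) P :=
    (((hS.add hX).abs).aemeasurable.pow_const r).aestronglyMeasurable
  constructor
  · refine hTint.mono hmeas_lhs ?_
    filter_upwards with ω
    rw [Real.norm_eq_abs, Real.norm_eq_abs,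
      abs_of_nonneg (Real.rpow_nonneg (abs_nonneg _) _)]
    exact le_trans (hbound ω) (le_abs_self _)
  · have hle : ∫ ω, |S ω + X ω| ^ r ∂P ≤ ∫ ω, T ω ∂P := by
      apply integral_mono_of_nonneg
      · filter_upwards with ω; exact Real.rpow_nonneg (abs_nonneg _) _
      · exact hTint
      · filter_upwards with ω; exact hbound ω
    rwa [hTval] at hle

-- transfer of integrals along equality of distributions
theorem transfer_int {Ω : Type} [MeasurableSpace Ω] {P : Measure Ω} {X Y : Ω → ℝ}
    (hX : Measurable X) (hY : Measurable Y) (hmap : P.map X = P.map Y)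
    (g : ℝ → ℝ) (hg : Measurable g) :
    ∫ ω, g (X ω) ∂P = ∫ ω, g (Y ω) ∂P := by
  rw [← integral_map hX.aemeasurable hg.aestronglyMeasurable, hmap,
    integral_map hY.aemeasurable hg.aestronglyMeasurable]

theorem transfer_integrable {Ω : Type} [MeasurableSpace Ω] {P : Measure Ω} {X Y : Ω → ℝ}
    (hX : Measurable X) (hY : Measurable Y) (hmap : P.map X = P.map Y)
    (g : ℝ → ℝ) (hg : Measurable g)
    (h : Integrable (fun ω => g (Y ω)) P) : Integrable (fun ω => g (X ω)) P := by
  have h1 : Integrable g (P.map Y) := by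
    rw [integrable_map_measure hg.aestronglyMeasurable hY.aemeasurable]
    exact h
  rw [← hmap] at h1
  rw [integrable_map_measure hg.aestronglyMeasurable hX.aemeasurable] at h1
  exact h1

/-- Marcinkiewicz–Zygmund / Whittle moment bound: for `r ≥ 2` there is a constant `C_r`,
depending only on `r`, such that for any i.i.d. centered sequence with finite `r`-th
moment, `E[|X₁ + ... + X_k|^r] ≤ C_r k^{r/2} E[|X|^r]`. -/
theorem stmt8 (r : ℝ) (hr : 2 ≤ r) :
    ∃ C : ℝ, 0 < C ∧
      ∀ (Ω : Type) (mΩ : MeasurableSpace Ω) (P : Measure Ω), IsProbabilityMeasure P →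
        ∀ X : ℕ → Ω → ℝ, (∀ i, Measurable (X i)) →
          iIndepFun X P →
          (∀ i, P.map (X i) = P.map (X 0)) →
          Integrable (fun ω => |X 0 ω| ^ r) P →
          (∫ ω, X 0 ω ∂P) = 0 →
          ∀ k : ℕ, 1 ≤ k →
            ∫ ω, |∑ i ∈ Finset.range k, X i ω| ^ r ∂P
              ≤ C * (k : ℝ) ^ (r / 2) * ∫ ω, |X 0 ω| ^ r ∂P := by
  have hr0 : (0:ℝ) < r := by linarith
  set c := cc r with hc_def
  have hc : 0 < c := cc_pos r hr
  set D := 4 * c / r with hD_def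
  have hD : 0 < D := by positivity
  set C := max 1 (max D (D ^ (r/2))) with hC_def
  have hC1 : (1:ℝ) ≤ C := le_max_left _ _
  have hC0 : (0:ℝ) < C := lt_of_lt_of_le one_pos hC1
  have hCD : D ≤ C := le_trans (le_max_left _ _) (le_max_right _ _)
  have hCD2 : D ≤ C ^ (2/r) := by
    rcases le_or_gt D 1 with h | h
    · calc D ≤ 1 := h
        _ = (1:ℝ) ^ (2/r) := (Real.one_rpow _).symm
        _ ≤ C ^ (2/r) := Real.rpow_le_rpow (by norm_num) hC1 (by positivity)
    · have hDr : D ^ (r/2) ≤ C := le_trans (le_max_right _ _) (le_max_right _ _)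
      calc D = (D ^ (r/2)) ^ (2/r) := by
            rw [← Real.rpow_mul hD.le]
            rw [show r/2 * (2/r) = 1 by field_simp]
            rw [Real.rpow_one]
        _ ≤ C ^ (2/r) := Real.rpow_le_rpow (Real.rpow_nonneg hD.le _) hDr (by positivity)
  refine ⟨C, hC0, ?_⟩
  intro Ω mΩ P hP X hmeas hindep hmap hint hmean k hk
  haveI := hP
  set M := ∫ ω, |X 0 ω| ^ r ∂P with hM_def
  have hM0 : 0 ≤ M := integral_nonneg fun ω => Real.rpow_nonneg (abs_nonneg _) _
  -- degenerate case M = 0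
  rcases eq_or_lt_of_le hM0 with hM | hM
  · have hX0ae : ∀ᵐ ω ∂P, X 0 ω = 0 := by
      have h0 : ∀ᵐ ω ∂P, |X 0 ω| ^ r = 0 := by
        have := (integral_eq_zero_iff_of_nonneg
          (fun ω => Real.rpow_nonneg (abs_nonneg _) _) hint).mp hM.symm
        filter_upwards [this] with ω hω using hω
      filter_upwards [h0] with ω hω
      by_contra hne
      have : (0:ℝ) < |X 0 ω| ^ r := Real.rpow_pos_of_pos (abs_pos.mpr hne) _
      rw [hω] at this; exact lt_irrefl 0 this
    have hXiae : ∀ i, ∀ᵐ ω ∂P, X i ω = 0 := by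
      intro i
      have hIi : ∫ ω, |X i ω| ^ r ∂P = 0 := by
        rw [transfer_int (hmeas i) (hmeas 0) (hmap i) (fun t => |t| ^ r)
          (measurable_id.abs.pow_const r), ← hM_def, ← hM]
      have hInt_i : Integrable (fun ω => |X i ω| ^ r) P :=
        transfer_integrable (hmeas i) (hmeas 0) (hmap i) (fun t => |t| ^ r)
          (measurable_id.abs.pow_const r) hint
      have h0 : ∀ᵐ ω ∂P, |X i ω| ^ r = 0 := by
        have := (integral_eq_zero_iff_of_nonneg
          (fun ω => Real.rpow_nonneg (abs_nonneg _) _) hInt_i).mp hIi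
        filter_upwards [this] with ω hω using hω
      filter_upwards [h0] with ω hω
      by_contra hne
      have : (0:ℝ) < |X i ω| ^ r := Real.rpow_pos_of_pos (abs_pos.mpr hne) _
      rw [hω] at this; exact lt_irrefl 0 this
    have hsum : ∀ᵐ ω ∂P, (∑ i ∈ Finset.range k, X i ω) = 0 := by
      have hall : ∀ᵐ ω ∂P, ∀ i ∈ Finset.range k, X i ω = 0 :=
        (ae_ball_iff (Finset.range k).countable_toSet).mpr fun i _ => hXiae i
      filter_upwards [hall] with ω hω
      exact Finset.sum_eq_zero hω
    have : ∫ ω, |∑ i ∈ Finset.range k, X i ω| ^ r ∂P = 0 := by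
      rw [integral_congr_ae (g := fun _ => (0:ℝ))]
      · simp
      · filter_upwards [hsum] with ω hω
        rw [hω, abs_zero, Real.zero_rpow (ne_of_gt hr0)]
    rw [this, ← hM, mul_zero]
  -- main case M > 0
  · -- preliminary transfers
    have hXir : ∀ i, Integrable (fun ω => |X i ω| ^ r) P := fun i =>
      transfer_integrable (hmeas i) (hmeas 0) (hmap i) (fun t => |t| ^ r)
        (measurable_id.abs.pow_const r) hint
    have hXi0 : ∀ i, ∫ ω, X i ω ∂P = 0 := fun i => by
      rw [transfer_int (hmeas i) (hmeas 0) (hmap i) (fun t => t) measurable_id]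
      exact hmean
    have hXi2 : ∀ i, ∫ ω, |X i ω| ^ (2:ℝ) ∂P ≤ M ^ (2/r) := fun i => by
      rw [transfer_int (hmeas i) (hmeas 0) (hmap i) (fun t => |t| ^ (2:ℝ))
        (measurable_id.abs.pow_const _)]
      exact lyap (hmeas 0).aestronglyMeasurable (by norm_num) hr hr0 hint
    have hXirval : ∀ i, ∫ ω, |X i ω| ^ r ∂P = M := fun i => by
      rw [transfer_int (hmeas i) (hmeas 0) (hmap i) (fun t => |t| ^ r)
        (measurable_id.abs.pow_const r)]
    -- the induction
    have main : ∀ k : ℕ, 1 ≤ k →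
        Integrable (fun ω => |∑ i ∈ Finset.range k, X i ω| ^ r) P ∧
        ∫ ω, |∑ i ∈ Finset.range k, X i ω| ^ r ∂P ≤ C * (k:ℝ) ^ (r/2) * M := by
      intro k hk
      induction k, hk using Nat.le_induction with
      | base =>
          constructor
          · simpa using hint
          · have h1 : ∫ ω, |∑ i ∈ Finset.range 1, X i ω| ^ r ∂P = M := by
              simp [← hM_def]
            rw [h1]
            push_cast
            rw [Real.one_rpow]
            nlinarith
      | succ k hk1 ih =>
          obtain ⟨ihint, ihbound⟩ := ih
          set S : Ω → ℝ := fun ω => ∑ i ∈ Finset.range k, X i ω with hS_def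
          have hSmeas : Measurable S := Finset.measurable_sum _ fun i _ => hmeas i
          have hindSX : IndepFun S (X k) P := by
            have := hindep.indepFun_finsetSum_of_notMem hmeas
              (Finset.notMem_range_self (n := k))
            have heq : (∑ i ∈ Finset.range k, X i) = S := by
              funext ω; rw [hS_def]; simp [Finset.sum_apply]
            rwa [heq] at this
          have hstep := step r hr hSmeas (hmeas k) hindSX ihint (hXir k) (hXi0 k)
          obtain ⟨hstepint, hstepbound⟩ := hstep
          have hsum_eq : ∀ ω, (∑ i ∈ Finset.range (k+1), X i ω) = S ω + X k ω := fun ω => by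
            rw [hS_def]; exact Finset.sum_range_succ _ _
          constructor
          · have : (fun ω => |∑ i ∈ Finset.range (k+1), X i ω| ^ r)
                = fun ω => |S ω + X k ω| ^ r := funext fun ω => by rw [hsum_eq ω]
            rw [this]; exact hstepint
          · have hLHS : ∫ ω, |∑ i ∈ Finset.range (k+1), X i ω| ^ r ∂P
                = ∫ ω, |S ω + X k ω| ^ r ∂P := by
              apply integral_congr_ae
              filter_upwards with ω
              rw [hsum_eq ω]
            rw [hLHS]
            -- numeric part
            have hk0 : (0:ℝ) < (k:ℝ) := by exact_mod_cast hk1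
            have hk1' : (1:ℝ) ≤ (k:ℝ) := by exact_mod_cast hk1
            set a := ∫ ω, |S ω| ^ r ∂P with ha_def
            have ha0 : 0 ≤ a := integral_nonneg fun ω => Real.rpow_nonneg (abs_nonneg _) _
            have hlyapS : ∫ ω, |S ω| ^ (r-2) ∂P ≤ a ^ ((r-2)/r) :=
              lyap hSmeas.aestronglyMeasurable (by linarith) (by linarith) hr0 ihint
            have hS2nonneg : 0 ≤ ∫ ω, |S ω| ^ (r-2) ∂P :=
              integral_nonneg fun ω => Real.rpow_nonneg (abs_nonneg _) _
            have hX2nonneg : 0 ≤ ∫ ω, |X k ω| ^ (2:ℝ) ∂P :=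
              integral_nonneg fun ω => Real.rpow_nonneg (abs_nonneg _) _
            -- bound the product term
            have hprod : (∫ ω, |S ω| ^ (r-2) ∂P) * (∫ ω, |X k ω| ^ (2:ℝ) ∂P)
                ≤ C ^ ((r-2)/r) * (k:ℝ) ^ ((r-2)/2) * M := by
              have h1 : a ^ ((r-2)/r) ≤ (C * (k:ℝ) ^ (r/2) * M) ^ ((r-2)/r) :=
                Real.rpow_le_rpow ha0 ihbound (div_nonneg (by linarith) hr0.le)
              have h2 : (C * (k:ℝ) ^ (r/2) * M) ^ ((r-2)/r)
                  = C ^ ((r-2)/r) * (k:ℝ) ^ ((r-2)/2) * M ^ ((r-2)/r) := by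
                rw [Real.mul_rpow (by positivity) hM.le,
                  Real.mul_rpow hC0.le (Real.rpow_nonneg hk0.le _),
                  ← Real.rpow_mul hk0.le]
                rw [show r/2 * ((r-2)/r) = (r-2)/2 by field_simp]
              have h3 : M ^ ((r-2)/r) * M ^ (2/r) = M := by
                rw [← Real.rpow_add hM]
                rw [show (r-2)/r + 2/r = 1 by field_simp; ring]
                exact Real.rpow_one M
              calc (∫ ω, |S ω| ^ (r-2) ∂P) * (∫ ω, |X k ω| ^ (2:ℝ) ∂P)
                  ≤ a ^ ((r-2)/r) * M ^ (2/r) := by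
                    apply mul_le_mul hlyapS (hXi2 k) hX2nonneg (Real.rpow_nonneg ha0 _)
                _ ≤ (C ^ ((r-2)/r) * (k:ℝ) ^ ((r-2)/2) * M ^ ((r-2)/r)) * M ^ (2/r) := by
                    apply mul_le_mul_of_nonneg_right _ (Real.rpow_nonneg hM0 _)
                    rw [← h2]; exact h1
                _ = C ^ ((r-2)/r) * (k:ℝ) ^ ((r-2)/2) * M := by
                    rw [mul_assoc, h3]
            -- numeric inequality
            have hkey : a + c * (C ^ ((r-2)/r) * (k:ℝ) ^ ((r-2)/2) * M + M)
                ≤ C * ((k:ℝ)+1) ^ (r/2) * M := by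
              have hBern : (k:ℝ) ^ (r/2) + (r/2) * (k:ℝ) ^ ((r-2)/2) ≤ ((k:ℝ)+1) ^ (r/2) := by
                have h1 : (1:ℝ) + (r/2) * (1/(k:ℝ)) ≤ (1 + 1/(k:ℝ)) ^ (r/2) :=
                  one_add_mul_self_le_rpow_one_add
                    (le_trans (by norm_num : (-1:ℝ) ≤ 0) (by positivity)) (by linarith)
                have h2 : ((k:ℝ)+1) ^ (r/2) = (k:ℝ) ^ (r/2) * (1 + 1/(k:ℝ)) ^ (r/2) := by
                  rw [← Real.mul_rpow hk0.le (by positivity)]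
                  congr 1; field_simp
                have h3 : (k:ℝ) ^ (r/2) * (1/(k:ℝ)) = (k:ℝ) ^ ((r-2)/2) := by
                  rw [show (r-2)/2 = r/2 - 1 by ring, Real.rpow_sub hk0, Real.rpow_one]
                  field_simp
                calc (k:ℝ) ^ (r/2) + (r/2) * (k:ℝ) ^ ((r-2)/2)
                    = (k:ℝ) ^ (r/2) * (1 + (r/2) * (1/(k:ℝ))) := by rw [← h3]; ring
                  _ ≤ (k:ℝ) ^ (r/2) * ((1 + 1/(k:ℝ)) ^ (r/2)) := by
                      apply mul_le_mul_of_nonneg_left h1 (Real.rpow_nonneg hk0.le _)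
                  _ = ((k:ℝ)+1) ^ (r/2) := h2.symm
              have hcC : c * C ^ ((r-2)/r) ≤ (r/4) * C := by
                have h1 : C ^ ((r-2)/r) = C / C ^ (2/r) := by
                  rw [show (r-2)/r = 1 - 2/r by field_simp, Real.rpow_sub hC0, Real.rpow_one]
                have hC2r : 0 < C ^ (2/r) := Real.rpow_pos_of_pos hC0 _
                rw [h1]
                calc c * (C / C ^ (2/r)) = c * C / C ^ (2/r) := by ring
                  _ ≤ c * C / D := by
                      exact div_le_div_of_nonneg_left (mul_nonneg hc.le hC0.le) hD hCD2
                  _ = (r/4) * C := by rw [hD_def]; field_simp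
              have hcsmall : c ≤ (r/4) * C := by
                have : D ≤ C := hCD
                rw [hD_def] at this
                rw [div_le_iff₀ hr0] at this
                nlinarith
              have hkpow1 : (1:ℝ) ≤ (k:ℝ) ^ ((r-2)/2) :=
                Real.one_le_rpow hk1' (by linarith : (0:ℝ) ≤ (r-2)/2)
              have hnum : C * (k:ℝ) ^ (r/2) + c * C ^ ((r-2)/r) * (k:ℝ) ^ ((r-2)/2) + c
                  ≤ C * ((k:ℝ)+1) ^ (r/2) := by
                have t1 : c * C ^ ((r-2)/r) * (k:ℝ) ^ ((r-2)/2)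
                    ≤ (r/4) * C * (k:ℝ) ^ ((r-2)/2) :=
                  mul_le_mul_of_nonneg_right hcC (Real.rpow_nonneg hk0.le _)
                have t2 : c ≤ (r/4) * C * (k:ℝ) ^ ((r-2)/2) := by
                  calc c ≤ (r/4) * C := hcsmall
                    _ = (r/4) * C * 1 := by ring
                    _ ≤ (r/4) * C * (k:ℝ) ^ ((r-2)/2) := by
                        apply mul_le_mul_of_nonneg_left hkpow1 (mul_nonneg (by linarith) hC0.le)
                calc C * (k:ℝ) ^ (r/2) + c * C ^ ((r-2)/r) * (k:ℝ) ^ ((r-2)/2) + c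
                    ≤ C * (k:ℝ) ^ (r/2) + (r/4) * C * (k:ℝ) ^ ((r-2)/2)
                      + (r/4) * C * (k:ℝ) ^ ((r-2)/2) := by linarith
                  _ = C * ((k:ℝ) ^ (r/2) + (r/2) * (k:ℝ) ^ ((r-2)/2)) := by ring
                  _ ≤ C * ((k:ℝ)+1) ^ (r/2) :=
                      mul_le_mul_of_nonneg_left hBern hC0.le
              calc a + c * (C ^ ((r-2)/r) * (k:ℝ) ^ ((r-2)/2) * M + M)
                  ≤ C * (k:ℝ) ^ (r/2) * M
                    + c * (C ^ ((r-2)/r) * (k:ℝ) ^ ((r-2)/2) * M + M) := by linarith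
                _ = (C * (k:ℝ) ^ (r/2) + c * C ^ ((r-2)/r) * (k:ℝ) ^ ((r-2)/2) + c) * M := by
                    ring
                _ ≤ (C * ((k:ℝ)+1) ^ (r/2)) * M := by
                    apply mul_le_mul_of_nonneg_right hnum hM0
                _ = C * ((k:ℝ)+1) ^ (r/2) * M := by ring
            -- combine
            have hfinal : ∫ ω, |S ω + X k ω| ^ r ∂P
                ≤ a + c * (C ^ ((r-2)/r) * (k:ℝ) ^ ((r-2)/2) * M + M) := by
              calc ∫ ω, |S ω + X k ω| ^ r ∂P
                  ≤ a + c * ((∫ ω, |S ω| ^ (r-2) ∂P) * (∫ ω, |X k ω| ^ (2:ℝ) ∂P)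
                    + ∫ ω, |X k ω| ^ r ∂P) := hstepbound
                _ ≤ a + c * (C ^ ((r-2)/r) * (k:ℝ) ^ ((r-2)/2) * M + M) := by
                    apply add_le_add_right
                    apply mul_le_mul_of_nonneg_left _ hc.le
                    apply add_le_add hprod
                    rw [hXirval k]
            have : ((k:ℝ)+1) = ((k+1 : ℕ) : ℝ) := by push_cast; ring
            rw [← this]
            exact le_trans hfinal hkey
    exact (main k hk).2
end

section
/- Let X₁, ..., X_k be random variables (possibly dependent), S_j = X₁ + ... + X_j, and M_k = max_{1≤j≤k} |S_j|. Suppose there exist α > 1/2, β ≥ 0, and nonnegative reals u₁, ..., u_k such that for all 0 ≤ i ≤ j ≤ k and all x > 0, P(|S_j − S_i| ≥ x) ≤ x^{−4β} (Σ_{i<l≤j} u_l)^{2α}. Then there exists a finite constant K depending only on α and β such that for all x > 0, P(M_k ≥ x) ≤ K x^{−4β} (Σ_{0<l≤k} u_l)^{2α}. -/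
set_option maxHeartbeats 1000000


open MeasureTheory Finset

private lemma prUnion {Ω : Type} [MeasurableSpace Ω] (P : Measure Ω) [IsProbabilityMeasure P]
    (A B : Set Ω) : (P (A ∪ B)).toReal ≤ (P A).toReal + (P B).toReal := by
  rw [← ENNReal.toReal_add (measure_ne_top P A) (measure_ne_top P B)]
  exact ENNReal.toReal_mono (ENNReal.add_ne_top.2 ⟨measure_ne_top P A, measure_ne_top P B⟩)
    (measure_union_le A B)

private lemma prMono {Ω : Type} [MeasurableSpace Ω] (P : Measure Ω) [IsProbabilityMeasure P]
    {A B : Set Ω} (h : A ⊆ B) : (P A).toReal ≤ (P B).toReal :=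
  ENNReal.toReal_mono (measure_ne_top P B) (measure_mono h)

private lemma billingsley_aux {Ω : Type} [MeasurableSpace Ω] (P : Measure Ω)
    [IsProbabilityMeasure P]
    (α β θ K' : ℝ) (hβ : 0 ≤ β) (hα : 1 / 2 < α) (hθ0 : 0 < θ) (hθ1 : θ < 1)
    (hK'pos : 0 < K')
    (hK' : K' * (2 * θ ^ (-(4 * β)) / 2 ^ (2 * α)) + 2 * (1 - θ) ^ (-(4 * β)) ≤ K')
    (X : ℕ → Ω → ℝ) (u : ℕ → ℝ) (hu : ∀ l, 0 ≤ u l) (k : ℕ)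
    (H : ∀ i j : ℕ, i ≤ j → j ≤ k → ∀ x : ℝ, 0 < x →
      (P {ω | x ≤ |(∑ l ∈ Ioc i j, X l ω)|}).toReal
        ≤ x ^ (-(4 * β)) * (∑ l ∈ Ioc i j, u l) ^ (2 * α)) :
    ∀ n : ℕ, ∀ i j : ℕ, j - i = n → i ≤ j → j ≤ k → ∀ x : ℝ, 0 < x →
      (P {ω | ∃ m ∈ Icc i j, x ≤ min |(∑ l ∈ Ioc i m, X l ω)| |(∑ l ∈ Ioc m j, X l ω)|}).toReal
        ≤ K' * x ^ (-(4 * β)) * (∑ l ∈ Ioc i j, u l) ^ (2 * α) := by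
  intro n
  induction n using Nat.strong_induction_on with
  | _ n IH =>
  intro i j hn hij hjk x hx
  have hU0 : 0 ≤ ∑ l ∈ Ioc i j, u l := Finset.sum_nonneg fun l _ => hu l
  have hRHS : 0 ≤ K' * x ^ (-(4 * β)) * (∑ l ∈ Ioc i j, u l) ^ (2 * α) := by
    have := Real.rpow_nonneg hx.le (-(4 * β))
    have := Real.rpow_nonneg hU0 (2 * α)
    positivity
  rcases Nat.eq_zero_or_pos n with hn0 | hnpos
  · -- base case: i = j, event is empty
    have hij : i = j := by omega
    subst hij
    have hempty : {ω : Ω | ∃ m ∈ Icc i i,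
        x ≤ min |(∑ l ∈ Ioc i m, X l ω)| |(∑ l ∈ Ioc m i, X l ω)|} = ∅ := by
      ext ω
      simp only [Set.mem_setOf_eq, Set.mem_empty_iff_false, iff_false, not_exists]
      rintro m ⟨hm, hmin⟩
      have hmi : m = i := by
        rw [Finset.mem_Icc] at hm; omega
      subst hmi
      simp only [Finset.Ioc_self, Finset.sum_empty, abs_zero, min_self] at hmin
      linarith
    rw [hempty]
    simpa using hRHS
  · -- inductive step
    classical
    have hij' : i < j := by omega
    set U := ∑ l ∈ Ioc i j, u l with hUdef
    have hex : ∃ h : ℕ, i < h ∧ h ≤ j ∧ U / 2 ≤ ∑ l ∈ Ioc i h, u l :=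
      ⟨j, hij', le_refl _, by linarith⟩
    set h := Nat.find hex with hhdef
    obtain ⟨hh1, hh2, hh3⟩ := Nat.find_spec hex
    -- left prefix sum is at most U/2
    have hAle : ∑ l ∈ Ioc i (h - 1), u l ≤ U / 2 := by
      rcases eq_or_lt_of_le (Nat.succ_le_of_lt hh1) with heq | hlt
      · rw [show h - 1 = i by omega]
        simp only [Finset.Ioc_self, Finset.sum_empty]
        linarith
      · have hmin := Nat.find_min hex (show h - 1 < h by omega)
        push_neg at hmin
        have := hmin (by omega) (by omega)
        linarith
    have hsplit : (∑ l ∈ Ioc i h, u l) + ∑ l ∈ Ioc h j, u l = U :=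
      Finset.sum_Ioc_consecutive _ hh1.le hh2
    have hBle : ∑ l ∈ Ioc h j, u l ≤ U / 2 := by linarith
    have hih1 : i ≤ h - 1 := by omega
    have hh1j : h - 1 ≤ j := by omega
    -- the inclusion
    have hsub : {ω : Ω | ∃ m ∈ Icc i j,
        x ≤ min |(∑ l ∈ Ioc i m, X l ω)| |(∑ l ∈ Ioc m j, X l ω)|} ⊆
        ({ω : Ω | ∃ m ∈ Icc i (h - 1),
            θ * x ≤ min |(∑ l ∈ Ioc i m, X l ω)| |(∑ l ∈ Ioc m (h - 1), X l ω)|} ∪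
         {ω : Ω | ∃ m ∈ Icc h j,
            θ * x ≤ min |(∑ l ∈ Ioc h m, X l ω)| |(∑ l ∈ Ioc m j, X l ω)|}) ∪
        ({ω : Ω | (1 - θ) * x ≤ |(∑ l ∈ Ioc (h - 1) j, X l ω)|} ∪
         {ω : Ω | (1 - θ) * x ≤ |(∑ l ∈ Ioc i h, X l ω)|}) := by
      rintro ω ⟨m, hm, hmin⟩
      rw [Finset.mem_Icc] at hm
      have h1' := (le_min_iff.mp hmin).1
      have h2' := (le_min_iff.mp hmin).2
      by_cases hcase : m ≤ h - 1
      · by_cases hd : (1 - θ) * x ≤ |(∑ l ∈ Ioc (h - 1) j, X l ω)|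
        · exact Or.inr (Or.inl hd)
        · push_neg at hd
          refine Or.inl (Or.inl ⟨m, Finset.mem_Icc.2 ⟨hm.1, hcase⟩, le_min (by nlinarith) ?_⟩)
          have hsum : (∑ l ∈ Ioc m (h - 1), X l ω) + ∑ l ∈ Ioc (h - 1) j, X l ω
              = ∑ l ∈ Ioc m j, X l ω := Finset.sum_Ioc_consecutive _ hcase hh1j
          have htri : |(∑ l ∈ Ioc m j, X l ω)|
              ≤ |(∑ l ∈ Ioc m (h - 1), X l ω)| + |(∑ l ∈ Ioc (h - 1) j, X l ω)| := by
            rw [← hsum]; exact abs_add_le _ _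
          linarith
      · have hhm : h ≤ m := by omega
        by_cases hd : (1 - θ) * x ≤ |(∑ l ∈ Ioc i h, X l ω)|
        · exact Or.inr (Or.inr hd)
        · push_neg at hd
          refine Or.inl (Or.inr ⟨m, Finset.mem_Icc.2 ⟨hhm, hm.2⟩, le_min ?_ (by nlinarith)⟩)
          have hsum : (∑ l ∈ Ioc i h, X l ω) + ∑ l ∈ Ioc h m, X l ω
              = ∑ l ∈ Ioc i m, X l ω := Finset.sum_Ioc_consecutive _ hh1.le hhm
          have htri : |(∑ l ∈ Ioc i m, X l ω)|
              ≤ |(∑ l ∈ Ioc i h, X l ω)| + |(∑ l ∈ Ioc h m, X l ω)| := by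
            rw [← hsum]; exact abs_add_le _ _
          linarith
    have hθx : 0 < θ * x := mul_pos hθ0 hx
    have h1θx : 0 < (1 - θ) * x := mul_pos (by linarith) hx
    -- probability bounds for the four pieces
    have key1 : (P {ω : Ω | ∃ m ∈ Icc i (h - 1),
        θ * x ≤ min |(∑ l ∈ Ioc i m, X l ω)| |(∑ l ∈ Ioc m (h - 1), X l ω)|}).toReal
        ≤ K' * (θ * x) ^ (-(4 * β)) * (∑ l ∈ Ioc i (h - 1), u l) ^ (2 * α) :=
      IH (h - 1 - i) (by omega) i (h - 1) rfl hih1 (le_trans hh1j hjk) (θ * x) hθx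
    have key2 : (P {ω : Ω | ∃ m ∈ Icc h j,
        θ * x ≤ min |(∑ l ∈ Ioc h m, X l ω)| |(∑ l ∈ Ioc m j, X l ω)|}).toReal
        ≤ K' * (θ * x) ^ (-(4 * β)) * (∑ l ∈ Ioc h j, u l) ^ (2 * α) :=
      IH (j - h) (by omega) h j rfl hh2 hjk (θ * x) hθx
    have key3 : (P {ω : Ω | (1 - θ) * x ≤ |(∑ l ∈ Ioc (h - 1) j, X l ω)|}).toReal
        ≤ ((1 - θ) * x) ^ (-(4 * β)) * (∑ l ∈ Ioc (h - 1) j, u l) ^ (2 * α) :=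
      H (h - 1) j hh1j hjk _ h1θx
    have key4 : (P {ω : Ω | (1 - θ) * x ≤ |(∑ l ∈ Ioc i h, X l ω)|}).toReal
        ≤ ((1 - θ) * x) ^ (-(4 * β)) * (∑ l ∈ Ioc i h, u l) ^ (2 * α) :=
      H i h hh1.le (le_trans hh2 hjk) _ h1θx
    -- monotonicity of the rpow of sums
    have hpow2α : (0:ℝ) ≤ 2 * α := by linarith
    have hA0 : 0 ≤ ∑ l ∈ Ioc i (h - 1), u l := Finset.sum_nonneg fun l _ => hu l
    have hB0 : 0 ≤ ∑ l ∈ Ioc h j, u l := Finset.sum_nonneg fun l _ => hu l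
    have hApow : (∑ l ∈ Ioc i (h - 1), u l) ^ (2 * α) ≤ (U / 2) ^ (2 * α) :=
      Real.rpow_le_rpow hA0 hAle hpow2α
    have hBpow : (∑ l ∈ Ioc h j, u l) ^ (2 * α) ≤ (U / 2) ^ (2 * α) :=
      Real.rpow_le_rpow hB0 hBle hpow2α
    have hCle : ∑ l ∈ Ioc (h - 1) j, u l ≤ U := by
      apply Finset.sum_le_sum_of_subset_of_nonneg (Finset.Ioc_subset_Ioc hih1 le_rfl)
      exact fun l _ _ => hu l
    have hDle : ∑ l ∈ Ioc i h, u l ≤ U := by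
      apply Finset.sum_le_sum_of_subset_of_nonneg (Finset.Ioc_subset_Ioc le_rfl hh2)
      exact fun l _ _ => hu l
    have hCpow : (∑ l ∈ Ioc (h - 1) j, u l) ^ (2 * α) ≤ U ^ (2 * α) :=
      Real.rpow_le_rpow (Finset.sum_nonneg fun l _ => hu l) hCle hpow2α
    have hDpow : (∑ l ∈ Ioc i h, u l) ^ (2 * α) ≤ U ^ (2 * α) :=
      Real.rpow_le_rpow (Finset.sum_nonneg fun l _ => hu l) hDle hpow2α
    -- rpow algebra
    have hθxeq : (θ * x) ^ (-(4 * β)) = θ ^ (-(4 * β)) * x ^ (-(4 * β)) :=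
      Real.mul_rpow hθ0.le hx.le
    have h1θxeq : ((1 - θ) * x) ^ (-(4 * β)) = (1 - θ) ^ (-(4 * β)) * x ^ (-(4 * β)) :=
      Real.mul_rpow (by linarith) hx.le
    have hhalfeq : (U / 2) ^ (2 * α) = U ^ (2 * α) / 2 ^ (2 * α) :=
      Real.div_rpow hU0 (by norm_num) _
    have hxpow : (0:ℝ) < x ^ (-(4 * β)) := Real.rpow_pos_of_pos hx _
    have hθpow : (0:ℝ) < θ ^ (-(4 * β)) := Real.rpow_pos_of_pos hθ0 _
    have h1θpow : (0:ℝ) < (1 - θ) ^ (-(4 * β)) := Real.rpow_pos_of_pos (by linarith) _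
    have h2pow : (0:ℝ) < 2 ^ (2 * α) := Real.rpow_pos_of_pos (by norm_num) _
    have hUpow : (0:ℝ) ≤ U ^ (2 * α) := Real.rpow_nonneg hU0 _
    have hθx2 : (0:ℝ) < (θ * x) ^ (-(4 * β)) := Real.rpow_pos_of_pos hθx _
    have h1θx2 : (0:ℝ) < ((1 - θ) * x) ^ (-(4 * β)) := Real.rpow_pos_of_pos h1θx _
    -- combine
    have hchain : (P {ω : Ω | ∃ m ∈ Icc i j,
        x ≤ min |(∑ l ∈ Ioc i m, X l ω)| |(∑ l ∈ Ioc m j, X l ω)|}).toReal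
        ≤ K' * (θ * x) ^ (-(4 * β)) * (U / 2) ^ (2 * α)
          + K' * (θ * x) ^ (-(4 * β)) * (U / 2) ^ (2 * α)
          + ((1 - θ) * x) ^ (-(4 * β)) * U ^ (2 * α)
          + ((1 - θ) * x) ^ (-(4 * β)) * U ^ (2 * α) := by
      refine le_trans (prMono P hsub) ?_
      refine le_trans (prUnion P _ _) ?_
      have t1 := le_trans (prUnion P _ _)
        (add_le_add
          (key1.trans (mul_le_mul_of_nonneg_left hApow (mul_nonneg hK'pos.le hθx2.le)))
          (key2.trans (mul_le_mul_of_nonneg_left hBpow (mul_nonneg hK'pos.le hθx2.le))))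
      have t2 := le_trans (prUnion P _ _)
        (add_le_add
          (key3.trans (mul_le_mul_of_nonneg_left hCpow h1θx2.le))
          (key4.trans (mul_le_mul_of_nonneg_left hDpow h1θx2.le)))
      linarith
    have hmul := mul_le_mul_of_nonneg_right hK' (mul_nonneg hxpow.le hUpow)
    calc (P {ω : Ω | ∃ m ∈ Icc i j,
          x ≤ min |(∑ l ∈ Ioc i m, X l ω)| |(∑ l ∈ Ioc m j, X l ω)|}).toReal
        ≤ K' * (θ * x) ^ (-(4 * β)) * (U / 2) ^ (2 * α)
          + K' * (θ * x) ^ (-(4 * β)) * (U / 2) ^ (2 * α)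
          + ((1 - θ) * x) ^ (-(4 * β)) * U ^ (2 * α)
          + ((1 - θ) * x) ^ (-(4 * β)) * U ^ (2 * α) := hchain
      _ = (K' * (2 * θ ^ (-(4 * β)) / 2 ^ (2 * α)) + 2 * (1 - θ) ^ (-(4 * β)))
          * (x ^ (-(4 * β)) * U ^ (2 * α)) := by
          rw [hθxeq, h1θxeq, hhalfeq]; field_simp; ring
      _ ≤ K' * (x ^ (-(4 * β)) * U ^ (2 * α)) := hmul
      _ = K' * x ^ (-(4 * β)) * U ^ (2 * α) := by ring

/-- Billingsley's maximal inequality: if the increments of the partial sums `S_j` satisfy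
`P(|S_j − S_i| ≥ x) ≤ x^{−4β} (Σ_{i<l≤j} u_l)^{2α}` with `α > 1/2, β ≥ 0`, then there is a
constant `K` depending only on `α` and `β` with
`P(max_{1≤j≤k} |S_j| ≥ x) ≤ K x^{−4β} (Σ_{0<l≤k} u_l)^{2α}` for all `x > 0`. -/
theorem stmt9 (α β : ℝ) (hα : 1 / 2 < α) (hβ : 0 ≤ β) :
    ∃ K : ℝ, 0 < K ∧
      ∀ (Ω : Type) (mΩ : MeasurableSpace Ω) (P : Measure Ω), IsProbabilityMeasure P →
        ∀ (k : ℕ) (hk : 1 ≤ k), ∀ (X : ℕ → Ω → ℝ), (∀ i, Measurable (X i)) →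
          ∀ (u : ℕ → ℝ), (∀ l, 0 ≤ u l) →
            (∀ i j : ℕ, i ≤ j → j ≤ k → ∀ x : ℝ, 0 < x →
              (P {ω | x ≤ |(∑ l ∈ Ioc i j, X l ω)|}).toReal
                ≤ x ^ (-(4 * β)) * (∑ l ∈ Ioc i j, u l) ^ (2 * α)) →
            ∀ x : ℝ, 0 < x →
              (P {ω | x ≤ (Icc 1 k).sup' (Finset.nonempty_Icc.2 hk)
                  (fun j => |(∑ l ∈ Ioc 0 j, X l ω)|)}).toReal
                ≤ K * x ^ (-(4 * β)) * (∑ l ∈ Ioc 0 k, u l) ^ (2 * α) := by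
  -- choice of constants
  have h2c : (0:ℝ) < 2 ^ (1 - 2 * α) := Real.rpow_pos_of_pos (by norm_num) _
  have h2c1 : (2:ℝ) ^ (1 - 2 * α) < 1 :=
    Real.rpow_lt_one_of_one_lt_of_neg (by norm_num) (by linarith)
  set c : ℝ := (1 + 2 ^ (1 - 2 * α)) / 2 with hcdef
  have hc0 : 0 < c := by positivity
  have hc1 : c < 1 := by rw [hcdef]; linarith
  have hcgt : 2 ^ (1 - 2 * α) < c := by rw [hcdef]; linarith
  set θ : ℝ := c ^ (1 / (4 * β + 1)) with hθdef
  have hθ0 : 0 < θ := Real.rpow_pos_of_pos hc0 _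
  have hθ1 : θ < 1 := Real.rpow_lt_one hc0.le hc1 (by positivity)
  -- θ ^ (-(4β)) ≤ c⁻¹
  have hθpowle : θ ^ (-(4 * β)) ≤ c⁻¹ := by
    have heq : θ ^ (-(4 * β)) = c ^ ((1 / (4 * β + 1)) * (-(4 * β))) := by
      rw [hθdef, ← Real.rpow_mul hc0.le]
    rw [heq, show c⁻¹ = c ^ (-1 : ℝ) by rw [Real.rpow_neg_one]]
    apply Real.rpow_le_rpow_of_exponent_ge hc0 hc1.le
    rw [div_mul_eq_mul_div, one_mul, neg_div, le_neg, neg_neg]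
    rw [div_le_one (by linarith)]
    linarith
  have h2pow : (0:ℝ) < 2 ^ (2 * α) := Real.rpow_pos_of_pos (by norm_num) _
  set ρ : ℝ := 2 * θ ^ (-(4 * β)) / 2 ^ (2 * α) with hρdef
  have hρ0 : 0 < ρ := by
    have h := Real.rpow_pos_of_pos hθ0 (-(4 * β))
    exact div_pos (by linarith) h2pow
  have hρ1 : ρ < 1 := by
    have h21 : (2:ℝ) ^ (1 - 2 * α) = 2 / 2 ^ (2 * α) := by
      rw [Real.rpow_sub (by norm_num), Real.rpow_one]
    have hstep : ρ ≤ 2 ^ (1 - 2 * α) * c⁻¹ := by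
      rw [hρdef, h21]
      rw [div_mul_eq_mul_div, div_le_div_iff_of_pos_right h2pow] at *
      nlinarith [inv_pos.2 hc0]
    have : 2 ^ (1 - 2 * α) * c⁻¹ < 1 := by
      rw [mul_inv_lt_iff₀ hc0, one_mul]; exact hcgt
    linarith
  have h1θpow : (0:ℝ) < (1 - θ) ^ (-(4 * β)) := Real.rpow_pos_of_pos (by linarith) _
  set K' : ℝ := 2 * (1 - θ) ^ (-(4 * β)) / (1 - ρ) with hK'def
  have hK'pos : 0 < K' := by
    rw [hK'def]
    exact div_pos (by linarith) (by linarith)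
  have hK'eq : K' * ρ + 2 * (1 - θ) ^ (-(4 * β)) ≤ K' := by
    have : K' * (1 - ρ) = 2 * (1 - θ) ^ (-(4 * β)) := by
      rw [hK'def, div_mul_cancel₀]
      linarith
    nlinarith
  have h24β : (0:ℝ) < 2 ^ (4 * β) := Real.rpow_pos_of_pos (by norm_num) _
  refine ⟨(K' + 1) * 2 ^ (4 * β), by positivity, ?_⟩
  intro Ω mΩ P hP k hk X hX u hu H x hx
  have hU0 : 0 ≤ ∑ l ∈ Ioc 0 k, u l := Finset.sum_nonneg fun l _ => hu l
  have hUpow : (0:ℝ) ≤ (∑ l ∈ Ioc 0 k, u l) ^ (2 * α) := Real.rpow_nonneg hU0 _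
  have hx2 : (0:ℝ) < x / 2 := by linarith
  -- the inclusion
  have hsub : {ω : Ω | x ≤ (Icc 1 k).sup' (Finset.nonempty_Icc.2 hk)
        (fun j => |(∑ l ∈ Ioc 0 j, X l ω)|)} ⊆
      {ω : Ω | ∃ m ∈ Icc 0 k,
          x / 2 ≤ min |(∑ l ∈ Ioc 0 m, X l ω)| |(∑ l ∈ Ioc m k, X l ω)|} ∪
      {ω : Ω | x / 2 ≤ |(∑ l ∈ Ioc 0 k, X l ω)|} := by
    intro ω hω
    rw [Set.mem_setOf_eq, Finset.le_sup'_iff] at hω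
    obtain ⟨m, hm, hxm⟩ := hω
    rw [Finset.mem_Icc] at hm
    by_cases hd : x / 2 ≤ |(∑ l ∈ Ioc 0 k, X l ω)|
    · exact Or.inr hd
    · push_neg at hd
      refine Or.inl ⟨m, Finset.mem_Icc.2 ⟨Nat.zero_le _, hm.2⟩, le_min (by linarith) ?_⟩
      have hsum : (∑ l ∈ Ioc 0 m, X l ω) + ∑ l ∈ Ioc m k, X l ω
          = ∑ l ∈ Ioc 0 k, X l ω := Finset.sum_Ioc_consecutive _ (Nat.zero_le _) hm.2
      have : |(∑ l ∈ Ioc 0 m, X l ω)|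
          ≤ |(∑ l ∈ Ioc 0 k, X l ω)| + |(∑ l ∈ Ioc m k, X l ω)| := by
        calc |(∑ l ∈ Ioc 0 m, X l ω)|
            = |(∑ l ∈ Ioc 0 k, X l ω) - ∑ l ∈ Ioc m k, X l ω| := by rw [← hsum]; ring_nf
          _ ≤ |(∑ l ∈ Ioc 0 k, X l ω)| + |(∑ l ∈ Ioc m k, X l ω)| := abs_sub _ _
      linarith
  have key1 := billingsley_aux P α β θ K' hβ hα hθ0 hθ1 hK'pos (by rw [← hρdef]; exact hK'eq)
    X u hu k H k 0 k (by omega) (Nat.zero_le _) le_rfl (x / 2) hx2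
  have key2 := H 0 k (Nat.zero_le _) le_rfl (x / 2) hx2
  have hx2pow : (x / 2) ^ (-(4 * β)) = x ^ (-(4 * β)) * 2 ^ (4 * β) := by
    rw [Real.div_rpow hx.le (by norm_num), Real.rpow_neg (by norm_num : (0:ℝ) ≤ 2) (4 * β)]
    field_simp
  calc (P {ω | x ≤ (Icc 1 k).sup' (Finset.nonempty_Icc.2 hk)
        (fun j => |(∑ l ∈ Ioc 0 j, X l ω)|)}).toReal
      ≤ (P {ω : Ω | ∃ m ∈ Icc 0 k,
          x / 2 ≤ min |(∑ l ∈ Ioc 0 m, X l ω)| |(∑ l ∈ Ioc m k, X l ω)|}).toReal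
        + (P {ω : Ω | x / 2 ≤ |(∑ l ∈ Ioc 0 k, X l ω)|}).toReal :=
      le_trans (prMono P hsub) (prUnion P _ _)
    _ ≤ K' * (x / 2) ^ (-(4 * β)) * (∑ l ∈ Ioc 0 k, u l) ^ (2 * α)
        + (x / 2) ^ (-(4 * β)) * (∑ l ∈ Ioc 0 k, u l) ^ (2 * α) := add_le_add key1 key2
    _ = (K' + 1) * 2 ^ (4 * β) * x ^ (-(4 * β)) * (∑ l ∈ Ioc 0 k, u l) ^ (2 * α) := by
        rw [hx2pow]; ring
end
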